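/- arXiv:1910.09654 — 6 statements merged into one kernel-verified Lean document; each statement's English description precedes it below -/
import Mathlib

section
/- Let F be a smooth 2-form on ℝ⁴ (a smooth map from ℝ⁴ to alternating 2-linear maps (ℝ⁴)² → ℝ). For μ ∈ {0,1,2,3} and t ∈ ℝ, let i⁽μ⁾_t : ℝ³ → ℝ⁴ be the affine immersion of the simultaneity leaf of frame μ, i⁽μ⁾_t(a₁,a₂,a₃) = t Γ⁽μ⁾ + a₁ X⁽μ⁾₁ + a₂ X⁽μ⁾₂ + a₃ X⁽μ⁾₃, and let B⁽μ⁾_t be the pullback of F along i⁽μ⁾_t, i.e. the 2-form on ℝ³ given by B⁽μ⁾_t(a)(u,v) = F(i⁽μ⁾_t(a))(L⁽μ⁾u, L⁽μ⁾v), where L⁽μ⁾ : ℝ³ → ℝ⁴ is the linear map sending the k-th standard basis vector to X⁽μ⁾ₖ. Then the exterior derivative of B⁽μ⁾_t vanishes identically on ℝ³ for every t ∈ ℝ and every μ ∈ {0,1,2,3} if and only if the exterior derivative dF vanishes identically on ℝ⁴. -/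
noncomputable section

/-- ℝ⁴, the Minkowski spacetime manifold. -/
abbrev V4 : Type := Fin 4 → ℝ

/-- The standard basis e₀, e₁, e₂, e₃ of ℝ⁴. -/
def e (i : Fin 4) : V4 := Pi.single i 1

/-- Contravariant part Γ⁽μ⁾ of the frame μ: Γ⁽⁰⁾ = e₀ and, for j ∈ {1,2,3},
Γ⁽ʲ⁾ = γ e₀ + βγ e_j (boost along e_j). -/
def Γfr (β γ : ℝ) (μ : Fin 4) : V4 :=
  if μ = 0 then e 0 else γ • e 0 + (β * γ) • e μ

/-- Spatial vectors X⁽μ⁾ₖ (k = 1,2,3, indexed by `k : Fin 3` ↦ spatial index `k+1`):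
for the fiducial frame X⁽⁰⁾ₖ = eₖ; for the frame boosted along e_j,
X⁽ʲ⁾ⱼ = βγ e₀ + γ e_j and X⁽ʲ⁾ₖ = eₖ for k ≠ j. -/
def Xfr (β γ : ℝ) (μ : Fin 4) (k : Fin 3) : V4 :=
  if k.succ = μ then (β * γ) • e 0 + γ • e μ else e k.succ

/-- Exterior derivative of a smooth p-form ω (given by its values
ω x (v₁, …, v_p) as a function): (dω)(x)(v₀, …, v_p)
= Σᵢ (−1)ⁱ (Dω(x) vᵢ)(v₀, …, v̂ᵢ, …, v_p), where Dω(x) is the Fréchet derivative. -/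
def extD {E : Type*} [NormedAddCommGroup E] [NormedSpace ℝ E] {p : ℕ}
    (η : E → (Fin p → E) → ℝ) (x : E) (v : Fin (p + 1) → E) : ℝ :=
  ∑ i : Fin (p + 1),
    (-1 : ℝ) ^ (i : ℕ) * fderiv ℝ (fun y => η y (fun j => v (i.succAbove j))) x (v i)

/-- The linear map L⁽μ⁾ : ℝ³ → ℝ⁴ sending the k-th standard basis vector to X⁽μ⁾ₖ. -/
def Lfun (β γ : ℝ) (μ : Fin 4) (u : Fin 3 → ℝ) : V4 := ∑ k : Fin 3, u k • Xfr β γ μ k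

/-- The affine immersion i⁽μ⁾_t : ℝ³ → ℝ⁴ of the simultaneity leaf of frame μ at time t:
i⁽μ⁾_t(a₁,a₂,a₃) = t Γ⁽μ⁾ + a₁ X⁽μ⁾₁ + a₂ X⁽μ⁾₂ + a₃ X⁽μ⁾₃. -/
def imm (β γ : ℝ) (μ : Fin 4) (t : ℝ) (a : Fin 3 → ℝ) : V4 :=
  t • Γfr β γ μ + ∑ k : Fin 3, a k • Xfr β γ μ k

/-- Pullback of a 2-form F on ℝ⁴ along i⁽μ⁾_t: the 2-form on ℝ³ given by
(a, (u,v)) ↦ F(i⁽μ⁾_t(a))(L⁽μ⁾u, L⁽μ⁾v). -/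
def pb2 (F : V4 → AlternatingMap ℝ V4 ℝ (Fin 2)) (β γ : ℝ) (μ : Fin 4) (t : ℝ) :
    (Fin 3 → ℝ) → (Fin 2 → (Fin 3 → ℝ)) → ℝ :=
  fun a v => F (imm β γ μ t a) (fun i => Lfun β γ μ (v i))

/-- Pullback of a 3-form J on ℝ⁴ along i⁽μ⁾_t. -/
def pb3 (J : V4 → AlternatingMap ℝ V4 ℝ (Fin 3)) (β γ : ℝ) (μ : Fin 4) (t : ℝ) :
    (Fin 3 → ℝ) → (Fin 3 → (Fin 3 → ℝ)) → ℝ :=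
  fun a v => J (imm β γ μ t a) (fun i => Lfun β γ μ (v i))

lemma extD2_eq {E : Type*} [NormedAddCommGroup E] [NormedSpace ℝ E]
    (η : E → (Fin 2 → E) → ℝ) (x : E) (v : Fin 3 → E) :
    extD η x v =
      fderiv ℝ (fun y => η y ![v 1, v 2]) x (v 0)
      - fderiv ℝ (fun y => η y ![v 0, v 2]) x (v 1)
      + fderiv ℝ (fun y => η y ![v 0, v 1]) x (v 2) := by
  have h0 : (fun j : Fin 2 => v j.succ) = ![v 1, v 2] := by
    funext j; fin_cases j <;> rfl
  have h1 : (fun j : Fin 2 => v ((1 : Fin 3).succAbove j)) = ![v 0, v 2] := by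
    funext j; fin_cases j <;> rfl
  have h2 : (fun j : Fin 2 => v ((2 : Fin 3).succAbove j)) = ![v 0, v 1] := by
    funext j; fin_cases j <;> rfl
  simp [extD, Fin.sum_univ_three, h0, h1, h2]
  ring

lemma V4_split (w : V4) :
    ∃ c0 c1 c2 c3 : ℝ, w = c0 • e 0 + (c1 • e 1 + (c2 • e 2 + c3 • e 3)) := by
  refine ⟨w 0, w 1, w 2, w 3, ?_⟩
  funext j; fin_cases j <;> simp [e, Pi.single_apply]

section Dlemmas
variable (F : V4 → AlternatingMap ℝ V4 ℝ (Fin 2))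

lemma upd0 (a b c : V4) : Function.update ![a, b] 0 c = ![c, b] := by
  funext j; fin_cases j <;> simp
lemma upd1 (a b c : V4) : Function.update ![a, b] 1 c = ![a, c] := by
  funext j; fin_cases j <;> simp

lemma F_add0 (y a a' b : V4) : F y ![a + a', b] = F y ![a, b] + F y ![a', b] := by
  rw [← upd0 a b (a + a'), (F y).map_update_add, upd0, upd0]
lemma F_add1 (y a b b' : V4) : F y ![a, b + b'] = F y ![a, b] + F y ![a, b'] := by
  rw [← upd1 a b (b + b'), (F y).map_update_add, upd1, upd1]
lemma F_smul0 (y : V4) (c : ℝ) (a b : V4) : F y ![c • a, b] = c * F y ![a, b] := by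
  rw [← upd0 a b (c • a), (F y).map_update_smul, upd0]; rfl
lemma F_smul1 (y : V4) (c : ℝ) (a b : V4) : F y ![a, c • b] = c * F y ![a, b] := by
  rw [← upd1 a b (c • b), (F y).map_update_smul, upd1]; rfl
lemma F_swap (y a b : V4) : F y ![b, a] = - F y ![a, b] := by
  have hc : ![a, b] ∘ Equiv.swap (0 : Fin 2) 1 = ![b, a] := by
    funext j; fin_cases j <;> simp
  have := (F y).map_swap ![a, b] (show (0 : Fin 2) ≠ 1 by decide)
  rw [hc] at this; exact this
lemma F_diag (y a : V4) : F y ![a, a] = 0 :=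
  (F y).map_eq_zero_of_eq ![a, a] (i := 0) (j := 1) rfl (by decide)

variable (hF : ∀ v : Fin 2 → V4, ContDiff ℝ (⊤ : ℕ∞) fun x => F x v)
include hF

lemma diffF (v : Fin 2 → V4) (x : V4) : DifferentiableAt ℝ (fun y => F y v) x :=
  ((hF v).differentiable (by simp)).differentiableAt

-- abbreviated D
local notation "D" => extD (fun y (w : Fin 2 → V4) => F y w)

set_option maxRecDepth 4000 in
lemma D_rep01 (x a c : V4) : D x ![a, a, c] = 0 := by
  rw [extD2_eq]
  simp only [Matrix.cons_val_zero, Matrix.cons_val_one, Matrix.head_cons,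
    Matrix.cons_val_two, Matrix.tail_cons]
  have h : (fun y => F y ![a, a]) = fun _ => (0:ℝ) := by funext y; simp [F_diag]
  rw [h, fderiv_fun_const]
  simp

set_option maxRecDepth 4000 in
lemma D_rep12 (x a c : V4) : D x ![a, c, c] = 0 := by
  rw [extD2_eq]
  simp only [Matrix.cons_val_zero, Matrix.cons_val_one, Matrix.head_cons,
    Matrix.cons_val_two, Matrix.tail_cons]
  have h : (fun y => F y ![c, c]) = fun _ => (0:ℝ) := by funext y; simp [F_diag]
  rw [h, fderiv_fun_const]
  simp

set_option maxRecDepth 4000 in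
lemma D_rep02 (x a c : V4) : D x ![a, c, a] = 0 := by
  rw [extD2_eq]
  simp only [Matrix.cons_val_zero, Matrix.cons_val_one, Matrix.head_cons,
    Matrix.cons_val_two, Matrix.tail_cons]
  have h1 : (fun y => F y ![a, a]) = fun _ => (0:ℝ) := by funext y; simp [F_diag]
  have h2 : (fun y => F y ![c, a]) = fun y => -F y ![a, c] := by funext y; exact F_swap F y a c
  rw [h1, h2, fderiv_fun_const, fderiv_fun_neg]
  simp

set_option maxRecDepth 4000 in
lemma D_swap01 (x a b c : V4) : D x ![b, a, c] = - D x ![a, b, c] := by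
  rw [extD2_eq, extD2_eq]
  simp only [Matrix.cons_val_zero, Matrix.cons_val_one, Matrix.head_cons,
    Matrix.cons_val_two, Matrix.tail_cons]
  have h : (fun y => F y ![b, a]) = fun y => -F y ![a, b] := by funext y; exact F_swap F y a b
  rw [h, fderiv_fun_neg]
  simp only [ContinuousLinearMap.neg_apply]
  ring

set_option maxRecDepth 4000 in
lemma D_swap12 (x a b c : V4) : D x ![a, c, b] = - D x ![a, b, c] := by
  rw [extD2_eq, extD2_eq]
  simp only [Matrix.cons_val_zero, Matrix.cons_val_one, Matrix.head_cons,
    Matrix.cons_val_two, Matrix.tail_cons]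
  have h : (fun y => F y ![c, b]) = fun y => -F y ![b, c] := by funext y; exact F_swap F y b c
  rw [h, fderiv_fun_neg]
  simp only [ContinuousLinearMap.neg_apply]
  ring

set_option maxRecDepth 4000 in
lemma D_add0 (x a a' b c : V4) :
    D x ![a + a', b, c] = D x ![a, b, c] + D x ![a', b, c] := by
  rw [extD2_eq, extD2_eq, extD2_eq]
  simp only [Matrix.cons_val_zero, Matrix.cons_val_one, Matrix.head_cons,
    Matrix.cons_val_two, Matrix.tail_cons]
  have h1 : (fun y => F y ![a + a', c]) = fun y => F y ![a, c] + F y ![a', c] := by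
    funext y; exact F_add0 F y a a' c
  have h2 : (fun y => F y ![a + a', b]) = fun y => F y ![a, b] + F y ![a', b] := by
    funext y; exact F_add0 F y a a' b
  rw [h1, h2, fderiv_fun_add (diffF F hF _ x) (diffF F hF _ x),
    fderiv_fun_add (diffF F hF _ x) (diffF F hF _ x)]
  simp only [ContinuousLinearMap.add_apply, map_add]
  ring

set_option maxRecDepth 4000 in
lemma D_smul0 (x : V4) (r : ℝ) (a b c : V4) :
    D x ![r • a, b, c] = r * D x ![a, b, c] := by
  rw [extD2_eq, extD2_eq]
  simp only [Matrix.cons_val_zero, Matrix.cons_val_one, Matrix.head_cons,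
    Matrix.cons_val_two, Matrix.tail_cons]
  have h1 : (fun y => F y ![r • a, c]) = fun y => r * F y ![a, c] := by
    funext y; exact F_smul0 F y r a c
  have h2 : (fun y => F y ![r • a, b]) = fun y => r * F y ![a, b] := by
    funext y; exact F_smul0 F y r a b
  rw [h1, h2, fderiv_const_mul (diffF F hF _ x), fderiv_const_mul (diffF F hF _ x)]
  simp only [ContinuousLinearMap.coe_smul', Pi.smul_apply, map_smul, smul_eq_mul]
  ring

set_option maxRecDepth 4000 in
lemma D_add1 (x a b b' c : V4) :
    D x ![a, b + b', c] = D x ![a, b, c] + D x ![a, b', c] := by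
  rw [extD2_eq, extD2_eq, extD2_eq]
  simp only [Matrix.cons_val_zero, Matrix.cons_val_one, Matrix.head_cons,
    Matrix.cons_val_two, Matrix.tail_cons]
  have h1 : (fun y => F y ![b + b', c]) = fun y => F y ![b, c] + F y ![b', c] := by
    funext y; exact F_add0 F y b b' c
  have h2 : (fun y => F y ![a, b + b']) = fun y => F y ![a, b] + F y ![a, b'] := by
    funext y; exact F_add1 F y a b b'
  rw [h1, h2, fderiv_fun_add (diffF F hF _ x) (diffF F hF _ x),
    fderiv_fun_add (diffF F hF _ x) (diffF F hF _ x)]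
  simp only [ContinuousLinearMap.add_apply, map_add]
  ring

set_option maxRecDepth 4000 in
lemma D_smul1 (x : V4) (r : ℝ) (a b c : V4) :
    D x ![a, r • b, c] = r * D x ![a, b, c] := by
  rw [extD2_eq, extD2_eq]
  simp only [Matrix.cons_val_zero, Matrix.cons_val_one, Matrix.head_cons,
    Matrix.cons_val_two, Matrix.tail_cons]
  have h1 : (fun y => F y ![r • b, c]) = fun y => r * F y ![b, c] := by
    funext y; exact F_smul0 F y r b c
  have h2 : (fun y => F y ![a, r • b]) = fun y => r * F y ![a, b] := by
    funext y; exact F_smul1 F y r a b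
  rw [h1, h2, fderiv_const_mul (diffF F hF _ x), fderiv_const_mul (diffF F hF _ x)]
  simp only [ContinuousLinearMap.coe_smul', Pi.smul_apply, map_smul, smul_eq_mul]
  ring

set_option maxRecDepth 4000 in
lemma D_add2 (x a b c c' : V4) :
    D x ![a, b, c + c'] = D x ![a, b, c] + D x ![a, b, c'] := by
  rw [extD2_eq, extD2_eq, extD2_eq]
  simp only [Matrix.cons_val_zero, Matrix.cons_val_one, Matrix.head_cons,
    Matrix.cons_val_two, Matrix.tail_cons]
  have h1 : (fun y => F y ![b, c + c']) = fun y => F y ![b, c] + F y ![b, c'] := by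
    funext y; exact F_add1 F y b c c'
  have h2 : (fun y => F y ![a, c + c']) = fun y => F y ![a, c] + F y ![a, c'] := by
    funext y; exact F_add1 F y a c c'
  rw [h1, h2, fderiv_fun_add (diffF F hF _ x) (diffF F hF _ x),
    fderiv_fun_add (diffF F hF _ x) (diffF F hF _ x)]
  simp only [ContinuousLinearMap.add_apply, map_add]
  ring

set_option maxRecDepth 4000 in
lemma D_smul2 (x : V4) (r : ℝ) (a b c : V4) :
    D x ![a, b, r • c] = r * D x ![a, b, c] := by
  rw [extD2_eq, extD2_eq]
  simp only [Matrix.cons_val_zero, Matrix.cons_val_one, Matrix.head_cons,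
    Matrix.cons_val_two, Matrix.tail_cons]
  have h1 : (fun y => F y ![b, r • c]) = fun y => r * F y ![b, c] := by
    funext y; exact F_smul1 F y r b c
  have h2 : (fun y => F y ![a, r • c]) = fun y => r * F y ![a, c] := by
    funext y; exact F_smul1 F y r a c
  rw [h1, h2, fderiv_const_mul (diffF F hF _ x), fderiv_const_mul (diffF F hF _ x)]
  simp only [ContinuousLinearMap.coe_smul', Pi.smul_apply, map_smul, smul_eq_mul]
  ring


lemma D_perms (x a b c : V4) (h : D x ![a, b, c] = 0) :
    D x ![b, a, c] = 0 ∧ D x ![a, c, b] = 0 ∧ D x ![c, b, a] = 0 ∧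
      D x ![b, c, a] = 0 ∧ D x ![c, a, b] = 0 := by
  have s1 := D_swap01 F hF x a b c
  have s2 := D_swap12 F hF x a b c
  have s3 := D_swap12 F hF x b a c
  have s4 := D_swap01 F hF x a c b
  have s5 := D_swap01 F hF x b c a
  refine ⟨?_, ?_, ?_, ?_, ?_⟩
  · rw [s1, h, neg_zero]
  · rw [s2, h, neg_zero]
  · rw [s5, s3, s1, h]; ring
  · rw [s3, s1, h]; ring
  · rw [s4, s2, h]; ring

set_option maxHeartbeats 1000000 in
lemma D_basis (x : V4) (h123 : D x ![e 1, e 2, e 3] = 0) (h023 : D x ![e 0, e 2, e 3] = 0)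
    (h013 : D x ![e 0, e 1, e 3] = 0) (h012 : D x ![e 0, e 1, e 2] = 0) :
    ∀ i j k : Fin 4, D x ![e i, e j, e k] = 0 := by
  intro i j k
  fin_cases i <;> fin_cases j <;> fin_cases k
  · exact D_rep01 F hF x _ _
  · exact D_rep01 F hF x _ _
  · exact D_rep01 F hF x _ _
  · exact D_rep01 F hF x _ _
  · exact D_rep02 F hF x _ _
  · exact D_rep12 F hF x _ _
  · exact h012
  · exact h013
  · exact D_rep02 F hF x _ _
  · exact (D_perms F hF x _ _ _ h012).2.1
  · exact D_rep12 F hF x _ _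
  · exact h023
  · exact D_rep02 F hF x _ _
  · exact (D_perms F hF x _ _ _ h013).2.1
  · exact (D_perms F hF x _ _ _ h023).2.1
  · exact D_rep12 F hF x _ _
  · exact D_rep12 F hF x _ _
  · exact D_rep02 F hF x _ _
  · exact (D_perms F hF x _ _ _ h012).1
  · exact (D_perms F hF x _ _ _ h013).1
  · exact D_rep01 F hF x _ _
  · exact D_rep01 F hF x _ _
  · exact D_rep01 F hF x _ _
  · exact D_rep01 F hF x _ _
  · exact (D_perms F hF x _ _ _ h012).2.2.2.1
  · exact D_rep02 F hF x _ _
  · exact D_rep12 F hF x _ _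
  · exact h123
  · exact (D_perms F hF x _ _ _ h013).2.2.2.1
  · exact D_rep02 F hF x _ _
  · exact (D_perms F hF x _ _ _ h123).2.1
  · exact D_rep12 F hF x _ _
  · exact D_rep12 F hF x _ _
  · exact (D_perms F hF x _ _ _ h012).2.2.2.2
  · exact D_rep02 F hF x _ _
  · exact (D_perms F hF x _ _ _ h023).1
  · exact (D_perms F hF x _ _ _ h012).2.2.1
  · exact D_rep12 F hF x _ _
  · exact D_rep02 F hF x _ _
  · exact (D_perms F hF x _ _ _ h123).1
  · exact D_rep01 F hF x _ _
  · exact D_rep01 F hF x _ _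
  · exact D_rep01 F hF x _ _
  · exact D_rep01 F hF x _ _
  · exact (D_perms F hF x _ _ _ h023).2.2.2.1
  · exact (D_perms F hF x _ _ _ h123).2.2.2.1
  · exact D_rep02 F hF x _ _
  · exact D_rep12 F hF x _ _
  · exact D_rep12 F hF x _ _
  · exact (D_perms F hF x _ _ _ h013).2.2.2.2
  · exact (D_perms F hF x _ _ _ h023).2.2.2.2
  · exact D_rep02 F hF x _ _
  · exact (D_perms F hF x _ _ _ h013).2.2.1
  · exact D_rep12 F hF x _ _
  · exact (D_perms F hF x _ _ _ h123).2.2.2.2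
  · exact D_rep02 F hF x _ _
  · exact (D_perms F hF x _ _ _ h023).2.2.1
  · exact (D_perms F hF x _ _ _ h123).2.2.1
  · exact D_rep12 F hF x _ _
  · exact D_rep02 F hF x _ _
  · exact D_rep01 F hF x _ _
  · exact D_rep01 F hF x _ _
  · exact D_rep01 F hF x _ _
  · exact D_rep01 F hF x _ _

lemma D_zero (x : V4) (hbasis : ∀ i j k : Fin 4, D x ![e i, e j, e k] = 0)
    (v : Fin 3 → V4) : D x v = 0 := by
  have L2 : ∀ (i j : Fin 4) (w : V4), D x ![e i, e j, w] = 0 := by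
    intro i j w
    obtain ⟨c0, c1, c2, c3, rfl⟩ := V4_split w
    simp only [D_add2 F hF, D_smul2 F hF, hbasis, mul_zero, add_zero]
  have L1 : ∀ (i : Fin 4) (b w : V4), D x ![e i, b, w] = 0 := by
    intro i b w
    obtain ⟨c0, c1, c2, c3, rfl⟩ := V4_split b
    simp only [D_add1 F hF, D_smul1 F hF, L2, mul_zero, add_zero]
  have L0 : ∀ a b w : V4, D x ![a, b, w] = 0 := by
    intro a b w
    obtain ⟨c0, c1, c2, c3, rfl⟩ := V4_split a
    simp only [D_add0 F hF, D_smul0 F hF, L1, mul_zero, add_zero]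
  have hv : v = ![v 0, v 1, v 2] := by
    funext i; fin_cases i <;> rfl
  rw [hv]; exact L0 _ _ _

end Dlemmas

def Lclm (β γ : ℝ) (μ : Fin 4) : (Fin 3 → ℝ) →L[ℝ] V4 :=
  ∑ k : Fin 3, (ContinuousLinearMap.proj k : (Fin 3 → ℝ) →L[ℝ] ℝ).smulRight (Xfr β γ μ k)

lemma Lclm_apply (β γ : ℝ) (μ : Fin 4) (u : Fin 3 → ℝ) :
    Lclm β γ μ u = Lfun β γ μ u := by
  simp [Lclm, Lfun, ContinuousLinearMap.sum_apply]

lemma extD_pb2 (F : V4 → AlternatingMap ℝ V4 ℝ (Fin 2))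
    (hF : ∀ v : Fin 2 → V4, ContDiff ℝ (⊤ : ℕ∞) fun x => F x v)
    (β γ : ℝ) (μ : Fin 4) (t : ℝ) (a : Fin 3 → ℝ) (v : Fin 3 → (Fin 3 → ℝ)) :
    extD (pb2 F β γ μ t) a v =
      extD (fun y (w : Fin 2 → V4) => F y w) (imm β γ μ t a)
        (fun i => Lfun β γ μ (v i)) := by
  unfold extD
  refine Finset.sum_congr rfl fun i _ => ?_
  congr 1
  have himm : HasFDerivAt (fun y : Fin 3 → ℝ => imm β γ μ t y) (Lclm β γ μ) a := by
    have hfun : (fun y : Fin 3 → ℝ => imm β γ μ t y)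
        = fun y => t • Γfr β γ μ + Lclm β γ μ y := by
      funext y; rw [imm, Lclm_apply]; rfl
    rw [hfun]
    simpa using (hasFDerivAt_const (t • Γfr β γ μ) a).add ((Lclm β γ μ).hasFDerivAt)
  set g : V4 → ℝ := fun z => F z (fun j => Lfun β γ μ (v (i.succAbove j))) with hg
  have hgd : DifferentiableAt ℝ g (imm β γ μ t a) :=
    ((hF _).differentiable (by simp)).differentiableAt
  have hcomp : HasFDerivAt (fun y => g (imm β γ μ t y))
      ((fderiv ℝ g (imm β γ μ t a)).comp (Lclm β γ μ)) a :=
    (hgd.hasFDerivAt.comp a himm : HasFDerivAt (g ∘ fun y => imm β γ μ t y) _ a)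
  have heq : (fun y => pb2 F β γ μ t y (fun j => v (i.succAbove j)))
      = fun y => g (imm β γ μ t y) := rfl
  rw [heq, hcomp.fderiv, ContinuousLinearMap.comp_apply, Lclm_apply]

lemma Lfun_single (β γ : ℝ) (μ : Fin 4) (i : Fin 3) :
    Lfun β γ μ (Pi.single i 1) = Xfr β γ μ i := by
  fin_cases i <;> simp [Lfun, Fin.sum_univ_three, Pi.single_apply]



/-- the magnetic-flux constraint d(B⁽μ⁾_t) = 0 on every simultaneity
leaf of each of the four boosted frames is equivalent to dF = 0 on ℝ⁴. -/
theorem covariantization_of_magnetic_constraint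
    (β γ : ℝ) (hβ0 : 0 < β) (hβ1 : β < 1)
    (hγ : γ = (1 - β ^ 2) ^ (-(1 / 2) : ℝ))
    (F : V4 → AlternatingMap ℝ V4 ℝ (Fin 2))
    (hF : ∀ v : Fin 2 → V4, ContDiff ℝ (⊤ : ℕ∞) fun x => F x v) :
    (∀ (μ : Fin 4) (t : ℝ) (a : Fin 3 → ℝ) (v : Fin 3 → (Fin 3 → ℝ)),
        extD (pb2 F β γ μ t) a v = 0) ↔
      ∀ (x : V4) (v : Fin 3 → V4), extD (fun y w => F y w) x v = 0 := by
  have hb2 : (0:ℝ) < 1 - β ^ 2 := by nlinarith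
  have hγpos : (0:ℝ) < γ := by rw [hγ]; exact Real.rpow_pos_of_pos hb2 _
  have hβγ : β * γ ≠ 0 := ne_of_gt (mul_pos hβ0 hγpos)
  have hγ2 : γ ^ 2 * (1 - β ^ 2) = 1 := by
    rw [hγ, ← Real.rpow_natCast ((1 - β ^ 2) ^ (-(1/2):ℝ)) 2, ← Real.rpow_mul hb2.le]
    norm_num
    rw [Real.rpow_neg_one]
    field_simp
  constructor
  · intro h x v
    -- Frame 0 condition
    have him0 : imm β γ 0 (x 0) ![x 1, x 2, x 3] = x := by
      funext i
      fin_cases i <;>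
        simp [imm, Γfr, Xfr, e, Fin.sum_univ_three, Pi.single_apply, show (Fin.succ 0 : Fin 4) = 1 from rfl, show (Fin.succ 1 : Fin 4) = 2 from rfl, show (Fin.succ 2 : Fin 4) = 3 from rfl]
    have k123 : extD (fun y (w : Fin 2 → V4) => F y w) x ![e 1, e 2, e 3] = 0 := by
      have h0 := h 0 (x 0) ![x 1, x 2, x 3] (fun i => Pi.single i 1)
      rw [extD_pb2 F hF, him0] at h0
      have hv : (fun i : Fin 3 => Lfun β γ 0 (Pi.single i 1)) = ![e 1, e 2, e 3] := by
        funext i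
        rw [Lfun_single]
        fin_cases i <;> simp [Xfr, show (Fin.succ 0 : Fin 4) = 1 from rfl, show (Fin.succ 1 : Fin 4) = 2 from rfl, show (Fin.succ 2 : Fin 4) = 3 from rfl]
      rw [hv] at h0
      exact h0
    -- Frame 1
    have him1 : imm β γ 1 (γ * x 0 - β * γ * x 1) ![γ * x 1 - β * γ * x 0, x 2, x 3] = x := by
      funext i
      fin_cases i <;>
        simp [imm, Γfr, Xfr, e, Fin.sum_univ_three, Pi.single_apply, show (Fin.succ 0 : Fin 4) = 1 from rfl, show (Fin.succ 1 : Fin 4) = 2 from rfl, show (Fin.succ 2 : Fin 4) = 3 from rfl] <;>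
        first
          | rfl
          | linear_combination x 0 * hγ2
          | linear_combination x 1 * hγ2
          | linear_combination x 2 * hγ2
          | linear_combination x 3 * hγ2
          | ring
    have k023 : extD (fun y (w : Fin 2 → V4) => F y w) x ![e 0, e 2, e 3] = 0 := by
      have h1 := h 1 (γ * x 0 - β * γ * x 1) ![γ * x 1 - β * γ * x 0, x 2, x 3]
        (fun i => Pi.single i 1)
      rw [extD_pb2 F hF, him1] at h1
      have hv : (fun i : Fin 3 => Lfun β γ 1 (Pi.single i 1))
          = ![(β * γ) • e 0 + γ • e 1, e 2, e 3] := by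
        funext i
        rw [Lfun_single]
        fin_cases i <;> simp [Xfr, show (Fin.succ 0 : Fin 4) = 1 from rfl, show (Fin.succ 1 : Fin 4) = 2 from rfl, show (Fin.succ 2 : Fin 4) = 3 from rfl]
      rw [hv, D_add0 F hF, D_smul0 F hF, D_smul0 F hF, k123, mul_zero, add_zero,
        mul_eq_zero] at h1
      exact h1.resolve_left hβγ
    -- Frame 2
    have him2 : imm β γ 2 (γ * x 0 - β * γ * x 2) ![x 1, γ * x 2 - β * γ * x 0, x 3] = x := by
      funext i
      fin_cases i <;>
        simp [imm, Γfr, Xfr, e, Fin.sum_univ_three, Pi.single_apply, show (Fin.succ 0 : Fin 4) = 1 from rfl, show (Fin.succ 1 : Fin 4) = 2 from rfl, show (Fin.succ 2 : Fin 4) = 3 from rfl] <;>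
        first
          | rfl
          | linear_combination x 0 * hγ2
          | linear_combination x 1 * hγ2
          | linear_combination x 2 * hγ2
          | linear_combination x 3 * hγ2
          | ring
    have k013 : extD (fun y (w : Fin 2 → V4) => F y w) x ![e 0, e 1, e 3] = 0 := by
      have h2 := h 2 (γ * x 0 - β * γ * x 2) ![x 1, γ * x 2 - β * γ * x 0, x 3]
        (fun i => Pi.single i 1)
      rw [extD_pb2 F hF, him2] at h2
      have hv : (fun i : Fin 3 => Lfun β γ 2 (Pi.single i 1))
          = ![e 1, (β * γ) • e 0 + γ • e 2, e 3] := by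
        funext i
        rw [Lfun_single]
        fin_cases i <;> simp [Xfr, show (Fin.succ 0 : Fin 4) = 1 from rfl, show (Fin.succ 1 : Fin 4) = 2 from rfl, show (Fin.succ 2 : Fin 4) = 3 from rfl]
      rw [hv, D_add1 F hF, D_smul1 F hF, D_smul1 F hF, k123, mul_zero, add_zero,
        mul_eq_zero] at h2
      exact (D_perms F hF x _ _ _ (h2.resolve_left hβγ)).1
    -- Frame 3
    have him3 : imm β γ 3 (γ * x 0 - β * γ * x 3) ![x 1, x 2, γ * x 3 - β * γ * x 0] = x := by
      funext i
      fin_cases i <;>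
        simp [imm, Γfr, Xfr, e, Fin.sum_univ_three, Pi.single_apply, show (Fin.succ 0 : Fin 4) = 1 from rfl, show (Fin.succ 1 : Fin 4) = 2 from rfl, show (Fin.succ 2 : Fin 4) = 3 from rfl] <;>
        first
          | rfl
          | linear_combination x 0 * hγ2
          | linear_combination x 1 * hγ2
          | linear_combination x 2 * hγ2
          | linear_combination x 3 * hγ2
          | ring
    have k012 : extD (fun y (w : Fin 2 → V4) => F y w) x ![e 0, e 1, e 2] = 0 := by
      have h3 := h 3 (γ * x 0 - β * γ * x 3) ![x 1, x 2, γ * x 3 - β * γ * x 0]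
        (fun i => Pi.single i 1)
      rw [extD_pb2 F hF, him3] at h3
      have hv : (fun i : Fin 3 => Lfun β γ 3 (Pi.single i 1))
          = ![e 1, e 2, (β * γ) • e 0 + γ • e 3] := by
        funext i
        rw [Lfun_single]
        fin_cases i <;> simp [Xfr, show (Fin.succ 0 : Fin 4) = 1 from rfl, show (Fin.succ 1 : Fin 4) = 2 from rfl, show (Fin.succ 2 : Fin 4) = 3 from rfl]
      rw [hv, D_add2 F hF, D_smul2 F hF, D_smul2 F hF, k123, mul_zero, add_zero,
        mul_eq_zero] at h3
      exact (D_perms F hF x _ _ _ (h3.resolve_left hβγ)).2.2.2.2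
    exact D_zero F hF x (D_basis F hF x k123 k023 k013 k012) v
  · intro h μ t a v
    rw [extD_pb2 F hF]
    exact h _ _
end
end

section
/- If J and J′ are alternating 3-linear forms on ℝ⁴ whose transversal components agree in all four boosted frames, i.e. J(X⁽μ⁾₁, X⁽μ⁾₂, X⁽μ⁾₃) = J′(X⁽μ⁾₁, X⁽μ⁾₂, X⁽μ⁾₃) for every μ ∈ {0,1,2,3}, then J = J′. -/
noncomputable section

/-- Swap first two slots. -/
lemma swap01 (f : AlternatingMap ℝ V4 ℝ (Fin 3)) (a b c : V4) :
    f ![b, a, c] = - f ![a, b, c] := by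
  have := f.map_swap ![a,b,c] (i := 0) (j := 1) (by decide)
  convert this using 2
  funext k; fin_cases k <;> simp [Equiv.swap_apply_def]

/-- Swap last two slots. -/
lemma swap12 (f : AlternatingMap ℝ V4 ℝ (Fin 3)) (a b c : V4) :
    f ![a, c, b] = - f ![a, b, c] := by
  have := f.map_swap ![a,b,c] (i := 1) (j := 2) (by decide)
  convert this using 2
  funext k; fin_cases k <;> simp [Equiv.swap_apply_def]

/-- Swap outer slots. -/
lemma swap02 (f : AlternatingMap ℝ V4 ℝ (Fin 3)) (a b c : V4) :
    f ![c, b, a] = - f ![a, b, c] := by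
  have := f.map_swap ![a,b,c] (i := 0) (j := 2) (by decide)
  convert this using 2
  funext k; fin_cases k <;> simp [Equiv.swap_apply_def]

/-- If an alternating 3-form vanishes on a triple, it vanishes on all its permutations. -/
lemma perm_zero (f : AlternatingMap ℝ V4 ℝ (Fin 3)) (a b c : V4) (h : f ![a,b,c] = 0) :
    f ![a,b,c] = 0 ∧ f ![a,c,b] = 0 ∧ f ![b,a,c] = 0 ∧ f ![b,c,a] = 0 ∧
    f ![c,a,b] = 0 ∧ f ![c,b,a] = 0 := by
  refine ⟨h, ?_, ?_, ?_, ?_, ?_⟩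
  · rw [swap12, h, neg_zero]
  · rw [swap01, h, neg_zero]
  · rw [swap12, swap01, h]; simp
  · rw [swap01, swap12, h]; simp
  · rw [swap02, h, neg_zero]

lemma expand0 (f : AlternatingMap ℝ V4 ℝ (Fin 3)) (x y b c : V4) (s t : ℝ) :
    f ![s•x + t•y, b, c] = s * f ![x,b,c] + t * f ![y,b,c] := by
  have hu : ∀ z : V4, Function.update ![x, b, c] 0 z = ![z, b, c] := by
    intro z; funext k; fin_cases k <;> simp [Function.update]
  rw [← hu, f.map_update_add, f.map_update_smul, f.map_update_smul, hu, hu]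
  simp [smul_eq_mul]

lemma expand1 (f : AlternatingMap ℝ V4 ℝ (Fin 3)) (x y b c : V4) (s t : ℝ) :
    f ![b, s•x + t•y, c] = s * f ![b,x,c] + t * f ![b,y,c] := by
  have hu : ∀ z : V4, Function.update ![b, x, c] 1 z = ![b, z, c] := by
    intro z; funext k; fin_cases k <;> simp [Function.update]
  rw [← hu, f.map_update_add, f.map_update_smul, f.map_update_smul, hu, hu]
  simp [smul_eq_mul]

lemma expand2 (f : AlternatingMap ℝ V4 ℝ (Fin 3)) (x y b c : V4) (s t : ℝ) :
    f ![b, c, s•x + t•y] = s * f ![b,c,x] + t * f ![b,c,y] := by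
  have hu : ∀ z : V4, Function.update ![b, c, x] 2 z = ![b, c, z] := by
    intro z; funext k; fin_cases k <;> simp [Function.update]
  rw [← hu, f.map_update_add, f.map_update_smul, f.map_update_smul, hu, hu]
  simp [smul_eq_mul]

/-- an alternating 3-form on ℝ⁴ is determined by its transversal
components J(X⁽μ⁾₁, X⁽μ⁾₂, X⁽μ⁾₃) in the four boosted frames. -/
theorem threeForm_determined_by_transversal_components
    (β γ : ℝ) (hβ0 : 0 < β) (hβ1 : β < 1)
    (hγ : γ = (1 - β ^ 2) ^ (-(1 / 2) : ℝ))
    (J J' : AlternatingMap ℝ V4 ℝ (Fin 3))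
    (h : ∀ μ : Fin 4, J (fun k => Xfr β γ μ k) = J' (fun k => Xfr β γ μ k)) :
    J = J' := by
  set D : AlternatingMap ℝ V4 ℝ (Fin 3) := J - J' with hD
  have hγ0 : 0 < γ := by
    rw [hγ]
    apply Real.rpow_pos_of_pos
    nlinarith
  have hβγ : β * γ ≠ 0 := by positivity
  have hDz : ∀ μ : Fin 4, D (fun k => Xfr β γ μ k) = 0 := by
    intro μ
    simp [hD, AlternatingMap.sub_apply, h μ]
  -- frame 0
  have h0 : D ![e 1, e 2, e 3] = 0 := by
    have := hDz 0
    have ht : (fun k => Xfr β γ 0 k) = ![e 1, e 2, e 3] := by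
      funext k; fin_cases k <;> simp [Xfr] <;> first | rfl | (intro hc; exact absurd rfl hc)
    rwa [ht] at this
  -- frame 1
  have h1 : D ![e 0, e 2, e 3] = 0 := by
    have := hDz 1
    have ht : (fun k => Xfr β γ 1 k) = ![(β*γ) • e 0 + γ • e 1, e 2, e 3] := by
      funext k; fin_cases k <;> simp [Xfr] <;> first | rfl | (intro hc; exact absurd rfl hc)
    rw [ht, expand0] at this
    rw [h0, mul_zero, add_zero, mul_eq_zero] at this
    exact this.resolve_left hβγ
  -- frame 2
  have h2 : D ![e 1, e 0, e 3] = 0 := by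
    have := hDz 2
    have ht : (fun k => Xfr β γ 2 k) = ![e 1, (β*γ) • e 0 + γ • e 2, e 3] := by
      funext k; fin_cases k <;> simp [Xfr] <;> first | rfl | (intro hc; exact absurd rfl hc)
    rw [ht, expand1] at this
    rw [h0, mul_zero, add_zero, mul_eq_zero] at this
    exact this.resolve_left hβγ
  have h2' : D ![e 0, e 1, e 3] = 0 := by
    have := swap01 D (e 0) (e 1) (e 3)
    rw [h2] at this
    linarith
  -- frame 3
  have h3 : D ![e 1, e 2, e 0] = 0 := by
    have := hDz 3
    have ht : (fun k => Xfr β γ 3 k) = ![e 1, e 2, (β*γ) • e 0 + γ • e 3] := by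
      funext k; fin_cases k <;> simp [Xfr] <;> first | rfl | (intro hc; exact absurd rfl hc)
    rw [ht, expand2] at this
    rw [h0, mul_zero, add_zero, mul_eq_zero] at this
    exact this.resolve_left hβγ
  have h3' : D ![e 0, e 1, e 2] = 0 := by
    have s1 := swap02 D (e 1) (e 2) (e 0)
    have s2 := swap12 D (e 0) (e 2) (e 1)
    rw [h3] at s1
    linarith
  -- all triples vanish
  obtain ⟨p1, p2, p3, p4, p5, p6⟩ := perm_zero D _ _ _ h0
  obtain ⟨q1, q2, q3, q4, q5, q6⟩ := perm_zero D _ _ _ h1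
  obtain ⟨r1, r2, r3, r4, r5, r6⟩ := perm_zero D _ _ _ h2'
  obtain ⟨t1, t2, t3, t4, t5, t6⟩ := perm_zero D _ _ _ h3'
  have key : ∀ i j k : Fin 4, D ![e i, e j, e k] = 0 := by
    intro i j k
    by_cases hij : i = j
    · subst hij
      exact D.map_eq_zero_of_eq _ (i := 0) (j := 1) rfl (by decide)
    by_cases hik : i = k
    · subst hik
      exact D.map_eq_zero_of_eq _ (i := 0) (j := 2) rfl (by decide)
    by_cases hjk : j = k
    · subst hjk
      exact D.map_eq_zero_of_eq _ (i := 1) (j := 2) rfl (by decide)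
    fin_cases i <;> fin_cases j <;> fin_cases k <;>
      first
        | exact absurd rfl hij
        | exact absurd rfl hik
        | exact absurd rfl hjk
        | assumption
  -- conclude via the standard basis
  have hJD : D = 0 := by
    apply (Pi.basisFun ℝ (Fin 4)).ext_alternating
    intro v _
    have hv : (fun i => (Pi.basisFun ℝ (Fin 4)) (v i)) = ![e (v 0), e (v 1), e (v 2)] := by
      funext k; fin_cases k <;> simp [e] <;> rfl
    show D (fun i => (Pi.basisFun ℝ (Fin 4)) (v i)) = (0 : AlternatingMap ℝ V4 ℝ (Fin 3)) _
    rw [hv, key]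
    simp
  have := sub_eq_zero.mp (by rw [← hD]; exact hJD : J - J' = 0)
  exact this
end
end

section
/- The linear map sending an alternating 3-linear form J on ℝ⁴ to the 4-tuple of its transversal components (J(X⁽⁰⁾₁, X⁽⁰⁾₂, X⁽⁰⁾₃), J(X⁽¹⁾₁, X⁽¹⁾₂, X⁽¹⁾₃), J(X⁽²⁾₁, X⁽²⁾₂, X⁽²⁾₃), J(X⁽³⁾₁, X⁽³⁾₂, X⁽³⁾₃)) ∈ ℝ⁴ is a linear isomorphism from the space of alternating 3-forms on ℝ⁴ onto ℝ⁴. -/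
noncomputable section

/-!
The alternating 3-forms on `ℝ⁴` form a space of dimension `choose 4 3 = 4`, so it suffices that
the component map is injective. By multilinearity the component in the frame boosted along `e_j`
is `γ J(e₁, e₂, e₃) + βγ J(e₁, e₂, e₃ with e_j replaced by e₀)`: the four components are a
triangular system in the values of `J` on the four increasing triples of basis vectors, invertible
because `βγ ≠ 0`, and an alternating form vanishing on those triples is zero.
-/

open Module Function

namespace Module.Basis

variable {R M N I : Type*} [CommRing R] [AddCommGroup M] [Module R M] [AddCommGroup N]
  [Module R N] [LinearOrder I] {n : ℕ}

theorem ext_alternating_of_strictMono (b : Basis I R M) {f g : M [⋀^Fin n]→ₗ[R] N}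
    (h : ∀ s : Fin n → I, StrictMono s → f (b ∘ s) = g (b ∘ s)) : f = g := by
  apply exteriorPower.alternatingMapLinearEquiv.injective
  refine LinearMap.ext_on (exteriorPower.ιMulti_family_span_of_span R b.span_eq) ?_
  rintro _ ⟨s, rfl⟩
  simpa only [exteriorPower.ιMulti_family, exteriorPower.alternatingMapLinearEquiv_apply_ιMulti]
    using h _ (Set.powersetCard.ofFinEmbEquiv.symm s).strictMono

end Module.Basis

section FiniteDimensional

variable {K M N : Type*} [Field K] [AddCommGroup M] [Module K M] [FiniteDimensional K M]
  [AddCommGroup N] [Module K N] {n : ℕ}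

instance AlternatingMap.instFiniteDimensional [FiniteDimensional K N] :
    FiniteDimensional K (M [⋀^Fin n]→ₗ[K] N) :=
  Module.Finite.equiv exteriorPower.alternatingMapLinearEquiv.symm

theorem AlternatingMap.finrank_eq_choose :
    finrank K (M [⋀^Fin n]→ₗ[K] K) = (finrank K M).choose n := by
  rw [exteriorPower.alternatingMapLinearEquiv.finrank_eq, Subspace.dual_finrank_eq,
    exteriorPower.finrank_eq]

end FiniteDimensional

theorem Fin.strictMono_three_four_cases {s : Fin 3 → Fin 4} (hs : StrictMono s) :
    s = ![1, 2, 3] ∨ s = ![0, 2, 3] ∨ s = ![0, 1, 3] ∨ s = ![0, 1, 2] := by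
  revert s
  unfold StrictMono
  decide

theorem Xfr_zero (β γ : ℝ) : Xfr β γ 0 = e ∘ Fin.succ := by
  funext k
  simp [Xfr, Fin.succ_ne_zero]

theorem Xfr_succ (β γ : ℝ) (j : Fin 3) :
    Xfr β γ j.succ = update (e ∘ Fin.succ) j ((β * γ) • e 0 + γ • e j.succ) := by
  funext k
  by_cases h : k = j
  · simp [Xfr, h]
  · simp [Xfr, h, Fin.succ_inj]

theorem AlternatingMap.apply_Xfr_succ (J : V4 [⋀^Fin 3]→ₗ[ℝ] ℝ) (β γ : ℝ) (j : Fin 3) :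
    J (Xfr β γ j.succ) = β * γ * J (e ∘ update Fin.succ j 0) + γ * J (e ∘ Fin.succ) := by
  rw [Xfr_succ, J.map_update_add, J.map_update_smul, J.map_update_smul, ← comp_update,
    ← comp_apply (f := e), update_eq_self, smul_eq_mul, smul_eq_mul]

def transversalComponents (β γ : ℝ) : (V4 [⋀^Fin 3]→ₗ[ℝ] ℝ) →ₗ[ℝ] (Fin 4 → ℝ) where
  toFun J μ := J (Xfr β γ μ)
  map_add' _ _ := rfl
  map_smul' _ _ := rfl

theorem transversalComponents_injective {β γ : ℝ} (hβγ : β * γ ≠ 0) :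
    Injective (transversalComponents β γ) := by
  rw [← LinearMap.ker_eq_bot, LinearMap.ker_eq_bot']
  intro J hJ
  have hX (μ : Fin 4) : J (Xfr β γ μ) = 0 := congrFun hJ μ
  have h0 : J (e ∘ Fin.succ) = 0 := by rw [← Xfr_zero β γ, hX]
  have hj (j : Fin 3) : J (e ∘ update Fin.succ j 0) = 0 := by
    have h := hX j.succ
    rw [J.apply_Xfr_succ, h0, mul_zero, add_zero] at h
    exact (mul_eq_zero.mp h).resolve_left hβγ
  have hb : ⇑(Pi.basisFun ℝ (Fin 4)) = e := funext fun i => Pi.basisFun_apply ℝ (Fin 4) i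
  refine (Pi.basisFun ℝ (Fin 4)).ext_alternating_of_strictMono fun s hs => ?_
  rw [hb, AlternatingMap.zero_apply]
  rcases Fin.strictMono_three_four_cases hs with rfl | rfl | rfl | rfl
  · rwa [show ![(1 : Fin 4), 2, 3] = Fin.succ by decide]
  · rw [show ![(0 : Fin 4), 2, 3] = update Fin.succ 0 0 by decide, hj]
  · rw [show ![(0 : Fin 4), 1, 3] = update Fin.succ 1 0 ∘ Equiv.swap 0 1 by decide,
      ← comp_assoc, J.map_perm, hj, smul_zero]
  · rw [show ![(0 : Fin 4), 1, 2] = update Fin.succ 2 0 ∘ (finRotate 3).symm by decide,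
      ← comp_assoc, J.map_perm, hj, smul_zero]

/-- the linear map sending an alternating 3-form J on ℝ⁴ to the 4-tuple
of its transversal components in the four frames is a linear isomorphism onto ℝ⁴. -/
theorem transversal_components_linear_iso
    (β γ : ℝ) (hβ0 : 0 < β) (hβ1 : β < 1)
    (hγ : γ = (1 - β ^ 2) ^ (-(1 / 2) : ℝ)) :
    ∃ φ : AlternatingMap ℝ V4 ℝ (Fin 3) ≃ₗ[ℝ] (Fin 4 → ℝ),
      ∀ (J : AlternatingMap ℝ V4 ℝ (Fin 3)) (μ : Fin 4),
        φ J μ = J (fun k => Xfr β γ μ k) := by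
  have hγ0 : 0 < γ := hγ ▸ Real.rpow_pos_of_pos (by nlinarith) _
  have hdim : finrank ℝ (V4 [⋀^Fin 3]→ₗ[ℝ] ℝ) = finrank ℝ (Fin 4 → ℝ) := by
    simp [AlternatingMap.finrank_eq_choose]
  exact ⟨LinearMap.linearEquivOfInjective _
    (transversalComponents_injective (mul_pos hβ0 hγ0).ne') hdim, fun _ _ => rfl⟩
end
end

section
/- If F and F′ are alternating 2-linear forms on ℝ⁴ whose transversal components agree in the three frames μ ∈ {0,1,2}, i.e. F(X⁽μ⁾ᵢ, X⁽μ⁾ⱼ) = F′(X⁽μ⁾ᵢ, X⁽μ⁾ⱼ) for every μ ∈ {0,1,2} and all 1 ≤ i < j ≤ 3, then F = F′; that is, a 2-form on spacetime is reconstructed from its transversal components in only three of the reference frames. -/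
noncomputable section

/-! The boosts mix e₀ into one spatial direction with the nonzero coefficient βγ. Frame 0 gives
the purely spatial components of `F - F'`, frame 1 then gives its components on (e₀, e₂) and
(e₀, e₃), and frame 2 its component on (e₀, e₁); a 2-form vanishing on all pairs of basis
vectors is zero. -/

namespace AlternatingMap

variable {R M N : Type*}

section Semiring

variable [Semiring R] [AddCommMonoid M] [Module R M] [AddCommGroup N] [Module R N]

theorem map_pair_swap (f : M [⋀^Fin 2]→ₗ[R] N) (x y : M) : f ![x, y] = -f ![y, x] := by
  have hswap : (![y, x] : Fin 2 → M) ∘ Equiv.swap 0 1 = ![x, y] := by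
    funext i; fin_cases i <;> rfl
  rw [← hswap, f.map_swap _ (by decide)]

theorem map_pair_eq_zero_of_swap (f : M [⋀^Fin 2]→ₗ[R] N) {x y : M} (h : f ![y, x] = 0) :
    f ![x, y] = 0 := by
  rw [map_pair_swap, h, neg_zero]

theorem map_pair_eq_zero_of_add_smul [IsDomain R] [Module.IsTorsionFree R N]
    (f : M [⋀^Fin 2]→ₗ[R] N) {c d : R} (hc : c ≠ 0) {w x z : M} (hx : f ![x, z] = 0)
    (hcd : f ![c • w + d • x, z] = 0) : f ![w, z] = 0 := by
  rw [map_vecCons_add, map_vecCons_smul, map_vecCons_smul, hx, smul_zero, add_zero] at hcd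
  exact (smul_eq_zero_iff_right hc).mp hcd

end Semiring

theorem eq_zero_of_basis_pairs [CommRing R] [AddCommGroup M] [Module R M] [AddCommGroup N]
    [Module R N] {ι : Type*} [LinearOrder ι] (b : Module.Basis ι R M)
    (f : M [⋀^Fin 2]→ₗ[R] N) (h : ∀ i j, i < j → f ![b i, b j] = 0) : f = 0 := by
  refine b.ext_alternating fun v hv => ?_
  have hpair : (fun k => b (v k)) = ![b (v 0), b (v 1)] := by
    funext k; fin_cases k <;> rfl
  rw [hpair, zero_apply]
  rcases lt_or_gt_of_ne (hv.ne (by decide : (0 : Fin 2) ≠ 1)) with hlt | hgt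
  · exact h _ _ hlt
  · exact f.map_pair_eq_zero_of_swap (h _ _ hgt)

end AlternatingMap

open AlternatingMap

/-- an alternating 2-form on ℝ⁴ is determined by its transversal
components F(X⁽μ⁾ᵢ, X⁽μ⁾ⱼ), 1 ≤ i < j ≤ 3, in the three frames μ ∈ {0,1,2}. -/
theorem twoForm_determined_by_three_frames
    (β γ : ℝ) (hβ0 : 0 < β) (hβ1 : β < 1)
    (hγ : γ = (1 - β ^ 2) ^ (-(1 / 2) : ℝ))
    (F F' : AlternatingMap ℝ V4 ℝ (Fin 2))
    (h : ∀ μ : Fin 4, μ ≠ 3 → ∀ i j : Fin 3, i < j →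
      F ![Xfr β γ μ i, Xfr β γ μ j] = F' ![Xfr β γ μ i, Xfr β γ μ j]) :
    F = F' := by
  have hβγ : β * γ ≠ 0 :=
    mul_ne_zero hβ0.ne' (hγ ▸ (Real.rpow_pos_of_pos (by nlinarith) _).ne')
  set D := F - F'
  have hD : ∀ μ : Fin 4, μ ≠ 3 → ∀ i j : Fin 3, i < j →
      D ![Xfr β γ μ i, Xfr β γ μ j] = 0 :=
    fun μ hμ i j hij => sub_eq_zero.mpr (h μ hμ i j hij)
  have h12 : D ![e 1, e 2] = 0 := hD 0 (by decide) 0 1 (by decide)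
  have h13 : D ![e 1, e 3] = 0 := hD 0 (by decide) 0 2 (by decide)
  have h23 : D ![e 2, e 3] = 0 := hD 0 (by decide) 1 2 (by decide)
  have h02 : D ![e 0, e 2] = 0 :=
    map_pair_eq_zero_of_add_smul D hβγ h12 (hD 1 (by decide) 0 1 (by decide))
  have h03 : D ![e 0, e 3] = 0 :=
    map_pair_eq_zero_of_add_smul D hβγ h13 (hD 1 (by decide) 0 2 (by decide))
  have h01 : D ![e 0, e 1] = 0 :=
    map_pair_eq_zero_of_add_smul D hβγ (map_pair_eq_zero_of_swap D h12)
      (map_pair_eq_zero_of_swap D (hD 2 (by decide) 0 1 (by decide)))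
  refine sub_eq_zero.mp (eq_zero_of_basis_pairs (Pi.basisFun ℝ (Fin 4)) D fun i j hij => ?_)
  simp only [Pi.basisFun_apply]
  change D ![e i, e j] = 0
  fin_cases i <;> fin_cases j <;> first | assumption | exact absurd hij (by decide)
end
end

section
/- Let G be a smooth 2-form and J a smooth 3-form on ℝ⁴. Then dG = J holds identically on ℝ⁴ if and only if for every x ∈ ℝ⁴ and every μ ∈ {0,1,2,3} the transversal components agree in frame μ, i.e. dG(x)(X⁽μ⁾₁, X⁽μ⁾₂, X⁽μ⁾₃) = J(x)(X⁽μ⁾₁, X⁽μ⁾₂, X⁽μ⁾₃). In other words, the full inhomogeneous Maxwell equation dG = J is equivalent to the validity of the Gauss-law constraint in the four boosted reference frames. -/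
noncomputable section

/-! ### Auxiliary lemmas -/

lemma comp_update_self (v : Fin 3 → V4) (i : Fin 3) (z : V4) :
    (fun j => Function.update v i z (i.succAbove j)) = fun j => v (i.succAbove j) := by
  funext j
  exact Function.update_of_ne (Fin.succAbove_ne i j) _ _

lemma comp_update_ne (v : Fin 3 → V4) {i i' : Fin 3} (z : V4) {j0 : Fin 2}
    (hj0 : i'.succAbove j0 = i) :
    (fun j => Function.update v i z (i'.succAbove j))
      = Function.update (fun j => v (i'.succAbove j)) j0 z := by
  funext j
  rcases eq_or_ne j j0 with rfl | hj
  · rw [hj0]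
    simp
  · rw [Function.update_of_ne hj]
    rw [Function.update_of_ne]
    intro hc
    exact hj (Fin.succAbove_right_injective (hc.trans hj0.symm))

/-- The exterior derivative of a smooth alternating 2-form, as an alternating 3-map. -/
def extDAlt (G : V4 → AlternatingMap ℝ V4 ℝ (Fin 2))
    (hG : ∀ v : Fin 2 → V4, ContDiff ℝ (⊤ : ℕ∞) fun x => G x v) (x : V4) :
    AlternatingMap ℝ V4 ℝ (Fin 3) where
  toFun v := extD (fun y w => G y w) x v
  map_update_add' := by
    intro dec v i a b
    have hde : dec = instDecidableEqFin 3 := Subsingleton.elim _ _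
    subst hde
    have hd : ∀ w : Fin 2 → V4, DifferentiableAt ℝ (fun y => G y w) x :=
      fun w => ((hG w).differentiable (by simp)).differentiableAt
    simp only [extD]
    rw [← Finset.sum_add_distrib]
    refine Finset.sum_congr rfl fun i' _ => ?_
    rcases eq_or_ne i' i with rfl | hne
    · rw [comp_update_self, comp_update_self, comp_update_self,
        Function.update_self, Function.update_self, Function.update_self,
        (fderiv ℝ (fun y => G y fun j => v (i'.succAbove j)) x).map_add, mul_add]
    · obtain ⟨j0, hj0⟩ := Fin.exists_succAbove_eq hne.symm
      rw [comp_update_ne v a hj0, comp_update_ne v b hj0, comp_update_ne v (a + b) hj0,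
        Function.update_of_ne hne, Function.update_of_ne hne, Function.update_of_ne hne]
      have heq : (fun y => G y (Function.update (fun j => v (i'.succAbove j)) j0 (a + b)))
          = fun y => G y (Function.update (fun j => v (i'.succAbove j)) j0 a)
            + G y (Function.update (fun j => v (i'.succAbove j)) j0 b) := by
        funext y
        exact (G y).map_update_add _ j0 a b
      rw [heq, fderiv_fun_add (hd _) (hd _)]
      simp [mul_add]
  map_update_smul' := by
    intro dec v i c a
    have hde : dec = instDecidableEqFin 3 := Subsingleton.elim _ _
    subst hde
    have hd : ∀ w : Fin 2 → V4, DifferentiableAt ℝ (fun y => G y w) x :=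
      fun w => ((hG w).differentiable (by simp)).differentiableAt
    simp only [extD]
    rw [Finset.smul_sum]
    refine Finset.sum_congr rfl fun i' _ => ?_
    rcases eq_or_ne i' i with rfl | hne
    · rw [comp_update_self, comp_update_self,
        Function.update_self, Function.update_self,
        (fderiv ℝ (fun y => G y fun j => v (i'.succAbove j)) x).map_smul]
      simp [smul_eq_mul]; ring
    · obtain ⟨j0, hj0⟩ := Fin.exists_succAbove_eq hne.symm
      rw [comp_update_ne v a hj0, comp_update_ne v (c • a) hj0,
        Function.update_of_ne hne, Function.update_of_ne hne]
      have heq : (fun y => G y (Function.update (fun j => v (i'.succAbove j)) j0 (c • a)))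
          = fun y => c • G y (Function.update (fun j => v (i'.succAbove j)) j0 a) := by
        funext y
        exact (G y).map_update_smul _ j0 c a
      rw [heq, fderiv_fun_const_smul (hd _)]
      simp [smul_eq_mul]; ring
  map_eq_zero_of_eq' := by
    intro v i j hveq hij
    have hd : ∀ w : Fin 2 → V4, DifferentiableAt ℝ (fun y => G y w) x :=
      fun w => ((hG w).differentiable (by simp)).differentiableAt
    have key : v 0 = v 1 ∨ v 0 = v 2 ∨ v 1 = v 2 := by
      fin_cases i <;> fin_cases j <;> simp_all <;> tauto
    simp only [extD]
    rw [Fin.sum_univ_three]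
    rcases key with h | h | h
    · have hz : (fun y => G y (fun j => v ((2 : Fin 3).succAbove j))) = fun _ => (0 : ℝ) := by
        funext y
        exact (G y).map_eq_zero_of_eq _ (show v ((2:Fin 3).succAbove 0) = v ((2:Fin 3).succAbove 1) from h) (by decide)
      have h01 : (fun j => v ((0 : Fin 3).succAbove j)) = fun j => v ((1 : Fin 3).succAbove j) := by
        funext j; fin_cases j
        · exact h.symm
        · rfl
      rw [hz, h01, show v 0 = v 1 from h]
      simp [fderiv_fun_const]
    · have hz : (fun y => G y (fun j => v ((1 : Fin 3).succAbove j))) = fun _ => (0 : ℝ) := by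
        funext y
        exact (G y).map_eq_zero_of_eq _ (show v ((1:Fin 3).succAbove 0) = v ((1:Fin 3).succAbove 1) from h) (by decide)
      have h02 : (fun j => v ((0 : Fin 3).succAbove j))
          = (fun j => v ((2 : Fin 3).succAbove j)) ∘ Equiv.swap (0 : Fin 2) 1 := by
        funext j; fin_cases j
        · rfl
        · simp only [Function.comp_apply]
          simpa [Equiv.swap_apply_def] using h.symm
      have hneg : (fun y => G y (fun j => v ((0 : Fin 3).succAbove j)))
          = fun y => -G y (fun j => v ((2 : Fin 3).succAbove j)) := by
        funext y
        rw [h02]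
        exact (G y).map_swap _ (by decide)
      rw [hz, hneg, fderiv_fun_neg, show v 2 = v 0 from h.symm]
      simp [fderiv_fun_const]
    · have hz : (fun y => G y (fun j => v ((0 : Fin 3).succAbove j))) = fun _ => (0 : ℝ) := by
        funext y
        exact (G y).map_eq_zero_of_eq _ (show v ((0:Fin 3).succAbove 0) = v ((0:Fin 3).succAbove 1) from h) (by decide)
      have h12 : (fun j => v ((1 : Fin 3).succAbove j)) = fun j => v ((2 : Fin 3).succAbove j) := by
        funext j; fin_cases j
        · rfl
        · exact h.symm
      rw [hz, h12, show v 1 = v 2 from h]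
      simp [fderiv_fun_const]

lemma strictMono_fin34 (w : Fin 3 → Fin 4) (hw : StrictMono w) :
    w = ![1,2,3] ∨ w = ![0,2,3] ∨ w = ![0,1,3] ∨ w = ![0,1,2] := by
  have h01 : w 0 < w 1 := hw (by decide)
  have h12 : w 1 < w 2 := hw (by decide)
  revert h01 h12
  revert w
  decide

lemma alt_zero (f : AlternatingMap ℝ V4 ℝ (Fin 3))
    (h : ∀ w : Fin 3 → Fin 4, StrictMono w → f (fun i => e (w i)) = 0) :
    f = 0 := by
  refine Module.Basis.ext_alternating (Pi.basisFun ℝ (Fin 4)) fun v hv => ?_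
  have hb : (fun i => (Pi.basisFun ℝ (Fin 4)) (v i)) = fun i => e (v i) := by
    funext i; simp [e]
  rw [hb]
  set σ := Tuple.sort v with hσ
  have hmono : Monotone (v ∘ σ) := Tuple.monotone_sort v
  have hsm : StrictMono (v ∘ σ) := hmono.strictMono_of_injective (hv.comp σ.injective)
  have h2 := f.map_perm (fun i => e (v (σ i))) σ⁻¹
  have h3 : ((fun i => e (v (σ i))) ∘ ⇑σ⁻¹) = fun i => e (v i) := by
    funext i; simp
  rw [h3] at h2
  have h4 : (f fun i => e (v (σ i))) = 0 := h (v ∘ σ) hsm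
  rw [h2, h4]
  simp

/-- dG = J identically iff the transversal components of dG and of J
agree in each of the four boosted frames at every point. -/
theorem inhomogeneous_maxwell_iff_gauss_constraints
    (β γ : ℝ) (hβ0 : 0 < β) (hβ1 : β < 1)
    (hγ : γ = (1 - β ^ 2) ^ (-(1 / 2) : ℝ))
    (G : V4 → AlternatingMap ℝ V4 ℝ (Fin 2))
    (J : V4 → AlternatingMap ℝ V4 ℝ (Fin 3))
    (hG : ∀ v : Fin 2 → V4, ContDiff ℝ (⊤ : ℕ∞) fun x => G x v)
    (hJ : ∀ v : Fin 3 → V4, ContDiff ℝ (⊤ : ℕ∞) fun x => J x v) :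
    (∀ (x : V4) (v : Fin 3 → V4), extD (fun y w => G y w) x v = J x v) ↔
      ∀ (x : V4) (μ : Fin 4),
        extD (fun y w => G y w) x (fun k => Xfr β γ μ k)
          = J x (fun k => Xfr β γ μ k) := by
  constructor
  · intro h x μ
    exact h x _
  · intro h x v
    set A := extDAlt G hG x with hA
    have hcoe : ∀ u : Fin 3 → V4, A u = extD (fun y w => G y w) x u := fun _ => rfl
    set D := A - J x with hD
    have hDv : ∀ u, D u = extD (fun y w => G y w) x u - J x u := by
      intro u
      rw [hD, AlternatingMap.sub_apply, hcoe]
    have hfr : ∀ μ, D (fun k => Xfr β γ μ k) = 0 := by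
      intro μ; rw [hDv, h x μ, sub_self]
    set s : Fin 3 → V4 := fun k => e k.succ with hs
    have h123 : D s = 0 := by
      have h0 := hfr 0
      have hseq : (fun k => Xfr β γ 0 k) = s := by
        funext k
        simp [Xfr, Fin.succ_ne_zero, hs]
      rwa [hseq] at h0
    have hb2 : (0:ℝ) < 1 - β ^ 2 := by nlinarith
    have hγpos : 0 < γ := by rw [hγ]; exact Real.rpow_pos_of_pos hb2 _
    have hβγ : β * γ ≠ 0 := ne_of_gt (mul_pos hβ0 hγpos)
    have hup : ∀ k : Fin 3, D (Function.update s k (e 0)) = 0 := by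
      intro k
      have hfrk := hfr k.succ
      have hXeq : (fun k' => Xfr β γ k.succ k')
          = Function.update s k ((β * γ) • e 0 + γ • e k.succ) := by
        funext k'
        rcases eq_or_ne k' k with rfl | hk
        · simp [Xfr]
        · rw [Function.update_of_ne hk]
          have hnk : k'.succ ≠ k.succ := fun hc => hk (Fin.succ_injective _ hc)
          simp [Xfr, hs, hnk]
      rw [hXeq, D.map_update_add, D.map_update_smul, D.map_update_smul] at hfrk
      have hss : Function.update s k (e k.succ) = s := by
        funext k'
        rcases eq_or_ne k' k with rfl | hk
        · simp [hs]
        · rw [Function.update_of_ne hk]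
      rw [hss, h123, smul_zero, add_zero, smul_eq_mul] at hfrk
      exact (mul_eq_zero.mp hfrk).resolve_left hβγ
    -- the four sorted basis triples
    have hw1 : D (fun i => e (![1,2,3] i)) = 0 := by
      have : (fun i : Fin 3 => e (![1,2,3] i)) = s := by
        funext k; fin_cases k <;> rfl
      rw [this]; exact h123
    have hw2 : D (fun i => e (![0,2,3] i)) = 0 := by
      have : (fun i : Fin 3 => e (![0,2,3] i)) = Function.update s 0 (e 0) := by
        funext k; fin_cases k <;> simp [hs] <;> rfl
      rw [this]; exact hup 0
    have hw3 : D (fun i => e (![0,1,3] i)) = 0 := by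
      have hsw := D.map_swap (fun i : Fin 3 => e (![0,1,3] i))
        (show (0 : Fin 3) ≠ 1 by decide)
      have ht : ((fun i : Fin 3 => e (![0,1,3] i)) ∘ ⇑(Equiv.swap (0:Fin 3) 1))
          = Function.update s 1 (e 0) := by
        funext k; fin_cases k <;> simp [hs, Equiv.swap_apply_def] <;> rfl
      rw [ht, hup 1] at hsw
      linarith [hsw]
    have hw4 : D (fun i => e (![0,1,2] i)) = 0 := by
      have hsw1 := D.map_swap ((fun i : Fin 3 => e (![0,1,2] i)) ∘ ⇑(Equiv.swap (0:Fin 3) 1))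
        (show (1 : Fin 3) ≠ 2 by decide)
      have hsw2 := D.map_swap (fun i : Fin 3 => e (![0,1,2] i))
        (show (0 : Fin 3) ≠ 1 by decide)
      have ht : (((fun i : Fin 3 => e (![0,1,2] i)) ∘ ⇑(Equiv.swap (0:Fin 3) 1))
          ∘ ⇑(Equiv.swap (1:Fin 3) 2)) = Function.update s 2 (e 0) := by
        funext k; fin_cases k <;> simp [hs, Equiv.swap_apply_def] <;> rfl
      rw [ht, hup 2] at hsw1
      rw [hsw2] at hsw1
      linarith [hsw1]
    have hDzero : D = 0 := by
      apply alt_zero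
      intro w hw
      rcases strictMono_fin34 w hw with rfl | rfl | rfl | rfl
      · exact hw1
      · exact hw2
      · exact hw3
      · exact hw4
    have := hDv v
    rw [hDzero] at this
    simp only [AlternatingMap.zero_apply] at this
    linarith [this]
end
end

section
/- Let F be a smooth 2-form on ℝ⁴ and fix μ ∈ {0,1,2,3}. For t ∈ ℝ let i⁽μ⁾_t : ℝ³ → ℝ⁴ be the affine immersion i⁽μ⁾_t(a₁,a₂,a₃) = t Γ⁽μ⁾ + a₁ X⁽μ⁾₁ + a₂ X⁽μ⁾₂ + a₃ X⁽μ⁾₃ and let B⁽μ⁾_t be the pullback of F along i⁽μ⁾_t (the 2-form on ℝ³ given by B⁽μ⁾_t(a)(u,v) = F(i⁽μ⁾_t(a))(L⁽μ⁾u, L⁽μ⁾v), where L⁽μ⁾ : ℝ³ → ℝ⁴ sends the k-th standard basis vector to X⁽μ⁾ₖ). Then d(B⁽μ⁾_t) = 0 on ℝ³ for every t ∈ ℝ if and only if dF(x)(X⁽μ⁾₁, X⁽μ⁾₂, X⁽μ⁾₃) = 0 for every x ∈ ℝ⁴; that is, the constraint on every simultaneity leaf of frame μ is equivalent to the vanishing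 of the transversal component of dF in frame μ on all of spacetime. -/
set_option maxHeartbeats 1000000

noncomputable section

namespace LeafAux

open Function

lemma upd0 (u u' z : V4) : Function.update ![u, z] 0 u' = ![u', z] := by
  funext j; fin_cases j <;> simp
lemma upd1 (u z z' : V4) : Function.update ![u, z] 1 z' = ![u, z'] := by
  funext j; fin_cases j <;> simp
lemma swap01 (u z : V4) : ![u, z] ∘ Equiv.swap 0 1 = ![z, u] := by
  funext j; fin_cases j <;> simp

variable {F : V4 → AlternatingMap ℝ V4 ℝ (Fin 2)}

lemma Fadd0 (y u u' z : V4) : F y ![u + u', z] = F y ![u, z] + F y ![u', z] := by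
  have h := (F y).map_update_add ![u, z] 0 u u'
  simpa [upd0] using h
lemma Fadd1 (y u z z' : V4) : F y ![u, z + z'] = F y ![u, z] + F y ![u, z'] := by
  have h := (F y).map_update_smul ![u, z] 1
  have h2 := (F y).map_update_add ![u, z] 1 z z'
  simpa [upd1] using h2
lemma Fsmul0 (y : V4) (r : ℝ) (u z : V4) : F y ![r • u, z] = r * F y ![u, z] := by
  have h := (F y).map_update_smul ![u, z] 0 r u
  simpa [upd0] using h
lemma Fsmul1 (y : V4) (r : ℝ) (u z : V4) : F y ![u, r • z] = r * F y ![u, z] := by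
  have h := (F y).map_update_smul ![u, z] 1 r z
  simpa [upd1] using h
lemma Fswap (y u z : V4) : F y ![z, u] = - F y ![u, z] := by
  have h := (F y).map_swap ![u, z] (i := 0) (j := 1) (by decide)
  rw [swap01] at h; exact h
lemma Fself (y u : V4) : F y ![u, u] = 0 :=
  (F y).map_eq_zero_of_eq ![u, u] (i := 0) (j := 1) rfl (by decide)

section
set_option linter.unusedSectionVars false
variable (hF : ∀ v : Fin 2 → V4, ContDiff ℝ (⊤ : ℕ∞) fun x => F x v)
include hF

lemma hd (m : Fin 2 → V4) (x : V4) : DifferentiableAt ℝ (fun y => F y m) x :=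
  ((hF m).differentiable (by simp)).differentiableAt

lemma fd_addl (x c u u' z : V4) :
    fderiv ℝ (fun y => F y ![u + u', z]) x c
      = fderiv ℝ (fun y => F y ![u, z]) x c + fderiv ℝ (fun y => F y ![u', z]) x c := by
  have h : (fun y => F y ![u + u', z]) = fun y => F y ![u, z] + F y ![u', z] :=
    funext fun y => Fadd0 y u u' z
  rw [h, fderiv_fun_add (hd hF _ x) (hd hF _ x)]; rfl

lemma fd_addr (x c u z z' : V4) :
    fderiv ℝ (fun y => F y ![u, z + z']) x c
      = fderiv ℝ (fun y => F y ![u, z]) x c + fderiv ℝ (fun y => F y ![u, z']) x c := by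
  have h : (fun y => F y ![u, z + z']) = fun y => F y ![u, z] + F y ![u, z'] :=
    funext fun y => Fadd1 y u z z'
  rw [h, fderiv_fun_add (hd hF _ x) (hd hF _ x)]; rfl

lemma fd_smull (x c : V4) (r : ℝ) (u z : V4) :
    fderiv ℝ (fun y => F y ![r • u, z]) x c = r * fderiv ℝ (fun y => F y ![u, z]) x c := by
  have h : (fun y => F y ![r • u, z]) = fun y => r * F y ![u, z] :=
    funext fun y => Fsmul0 y r u z
  rw [h, fderiv_const_mul (hd hF _ x)]; rfl

lemma fd_smulr (x c : V4) (r : ℝ) (u z : V4) :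
    fderiv ℝ (fun y => F y ![u, r • z]) x c = r * fderiv ℝ (fun y => F y ![u, z]) x c := by
  have h : (fun y => F y ![u, r • z]) = fun y => r * F y ![u, z] :=
    funext fun y => Fsmul1 y r u z
  rw [h, fderiv_const_mul (hd hF _ x)]; rfl

lemma fd_swap (x c u z : V4) :
    fderiv ℝ (fun y => F y ![z, u]) x c = - fderiv ℝ (fun y => F y ![u, z]) x c := by
  have h : (fun y => F y ![z, u]) = fun y => -(F y ![u, z]) := funext fun y => Fswap y u z
  rw [h, fderiv_fun_neg]; rfl

lemma fd_self (x c u : V4) : fderiv ℝ (fun y => F y ![u, u]) x c = 0 := by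
  have h : (fun y => F y ![u, u]) = fun _ => (0 : ℝ) := funext fun y => Fself y u
  rw [h, fderiv_fun_const]; rfl

end

lemma extD_two {E : Type*} [NormedAddCommGroup E] [NormedSpace ℝ E]
    (η : E → (Fin 2 → E) → ℝ) (x : E) (w : Fin 3 → E) :
    extD η x w = fderiv ℝ (fun y => η y ![w 1, w 2]) x (w 0)
      - fderiv ℝ (fun y => η y ![w 0, w 2]) x (w 1)
      + fderiv ℝ (fun y => η y ![w 0, w 1]) x (w 2) := by
  have h0 : (fun j : Fin 2 => w ((0 : Fin 3).succAbove j)) = ![w 1, w 2] := by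
    funext j; fin_cases j <;> rfl
  have h1 : (fun j : Fin 2 => w ((1 : Fin 3).succAbove j)) = ![w 0, w 2] := by
    funext j; fin_cases j <;> rfl
  have h2 : (fun j : Fin 2 => w ((2 : Fin 3).succAbove j)) = ![w 0, w 1] := by
    funext j; fin_cases j <;> rfl
  simp only [extD]
  rw [Fin.sum_univ_three]
  simp only [h0, h1, h2]
  norm_num
  ring

/-- `Lfun` as a continuous linear map. -/
def Lmap (β γ : ℝ) (μ : Fin 4) : (Fin 3 → ℝ) →L[ℝ] V4 :=
  LinearMap.toContinuousLinearMap
    { toFun := Lfun β γ μ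
      map_add' := by
        intro u u'
        simp [Lfun, add_smul, Finset.sum_add_distrib]
      map_smul' := by
        intro r u
        simp [Lfun, Finset.smul_sum, smul_smul] }

lemma Lmap_apply (β γ : ℝ) (μ : Fin 4) (u : Fin 3 → ℝ) : Lmap β γ μ u = Lfun β γ μ u := rfl

variable (hF : ∀ v : Fin 2 → V4, ContDiff ℝ (⊤ : ℕ∞) fun x => F x v)
include hF

lemma fd_pull (β γ : ℝ) (μ : Fin 4) (t : ℝ) (a : Fin 3 → ℝ) (m : Fin 2 → (Fin 3 → ℝ))
    (c : Fin 3 → ℝ) :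
    fderiv ℝ (fun b => F (imm β γ μ t b) (fun j => Lfun β γ μ (m j))) a c
      = fderiv ℝ (fun y => F y (fun j => Lfun β γ μ (m j))) (imm β γ μ t a) (Lfun β γ μ c) := by
  have h1 : HasFDerivAt (fun b => imm β γ μ t b) (Lmap β γ μ) a := by
    have : (fun b => imm β γ μ t b) = fun b => t • Γfr β γ μ + Lmap β γ μ b := rfl
    rw [this]
    exact (Lmap β γ μ).hasFDerivAt.const_add _
  have h2 : HasFDerivAt (fun y => F y (fun j => Lfun β γ μ (m j)))
      (fderiv ℝ (fun y => F y (fun j => Lfun β γ μ (m j))) (imm β γ μ t a)) (imm β γ μ t a) :=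
    (hd hF _ _).hasFDerivAt
  have h3 := (h2.comp a h1).fderiv
  have h4 : (fun b => F (imm β γ μ t b) (fun j => Lfun β γ μ (m j)))
      = (fun y => F y (fun j => Lfun β γ μ (m j))) ∘ imm β γ μ t := rfl
  rw [h4, h3]; rfl

lemma pull (β γ : ℝ) (μ : Fin 4) (t : ℝ) (a : Fin 3 → ℝ) (v : Fin 3 → (Fin 3 → ℝ)) :
    extD (pb2 F β γ μ t) a v
      = extD (fun y (w : Fin 2 → V4) => F y w) (imm β γ μ t a) (fun i => Lfun β γ μ (v i)) := by
  unfold extD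
  refine Finset.sum_congr rfl fun i _ => ?_
  congr 1
  exact fd_pull hF β γ μ t a (fun j => v (i.succAbove j)) (v i)

lemma det_expand (β γ : ℝ) (μ : Fin 4) (x : V4) (v : Fin 3 → Fin 3 → ℝ) :
    extD (fun y (w : Fin 2 → V4) => F y w) x (fun i => Lfun β γ μ (v i))
      = (v 0 0 * (v 1 1 * v 2 2 - v 1 2 * v 2 1)
          - v 0 1 * (v 1 0 * v 2 2 - v 1 2 * v 2 0)
          + v 0 2 * (v 1 0 * v 2 1 - v 1 1 * v 2 0))
        * extD (fun y (w : Fin 2 → V4) => F y w) x (fun k => Xfr β γ μ k) := by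
  rw [extD_two, extD_two]
  have hw : ∀ i, Lfun β γ μ (v i)
      = v i 0 • Xfr β γ μ 0 + (v i 1 • Xfr β γ μ 1 + v i 2 • Xfr β γ μ 2) := by
    intro i; simp [Lfun, Fin.sum_univ_three, add_assoc]
  have s10 : ∀ c, fderiv ℝ (fun y => F y ![Xfr β γ μ 1, Xfr β γ μ 0]) x c
      = - fderiv ℝ (fun y => F y ![Xfr β γ μ 0, Xfr β γ μ 1]) x c :=
    fun c => fd_swap hF x c _ _
  have s20 : ∀ c, fderiv ℝ (fun y => F y ![Xfr β γ μ 2, Xfr β γ μ 0]) x c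
      = - fderiv ℝ (fun y => F y ![Xfr β γ μ 0, Xfr β γ μ 2]) x c :=
    fun c => fd_swap hF x c _ _
  have s21 : ∀ c, fderiv ℝ (fun y => F y ![Xfr β γ μ 2, Xfr β γ μ 1]) x c
      = - fderiv ℝ (fun y => F y ![Xfr β γ μ 1, Xfr β γ μ 2]) x c :=
    fun c => fd_swap hF x c _ _
  simp only [hw]
  simp only [fd_addl hF, fd_addr hF, fd_smull hF, fd_smulr hF, map_add, map_smul,
    smul_eq_mul, fd_self hF, s10, s20, s21]
  ring

omit hF

lemma Lfun_single (β γ : ℝ) (μ : Fin 4) (k : Fin 3) :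
    Lfun β γ μ (Pi.single k 1) = Xfr β γ μ k := by
  fin_cases k <;>
    simp [Lfun, Fin.sum_univ_three, Pi.single_apply]

lemma succ2 : (2 : Fin 3).succ = (3 : Fin 4) := rfl

lemma imm_surj (β γ : ℝ) (hγ2 : γ * γ * (1 - β ^ 2) = 1) (μ : Fin 4) (x : V4) :
    ∃ t a, imm β γ μ t a = x := by
  fin_cases μ
  · refine ⟨x 0, ![x 1, x 2, x 3], ?_⟩
    funext i
    fin_cases i <;>
      simp [imm, Γfr, Xfr, e, Fin.sum_univ_three, Pi.single_apply, succ2]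
  · refine ⟨γ * x 0 - β * γ * x 1, ![γ * x 1 - β * γ * x 0, x 2, x 3], ?_⟩
    funext i
    fin_cases i <;>
      simp [imm, Γfr, Xfr, e, Fin.sum_univ_three, Pi.single_apply, succ2]
    · linear_combination x 0 * hγ2
    · linear_combination x 1 * hγ2
  · refine ⟨γ * x 0 - β * γ * x 2, ![x 1, γ * x 2 - β * γ * x 0, x 3], ?_⟩
    funext i
    fin_cases i <;>
      simp [imm, Γfr, Xfr, e, Fin.sum_univ_three, Pi.single_apply, succ2]
    · linear_combination x 0 * hγ2
    · linear_combination x 2 * hγ2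
  · refine ⟨γ * x 0 - β * γ * x 3, ![x 1, x 2, γ * x 3 - β * γ * x 0], ?_⟩
    funext i
    fin_cases i <;>
      simp [imm, Γfr, Xfr, e, Fin.sum_univ_three, Pi.single_apply, succ2]
    · linear_combination x 0 * hγ2
    · linear_combination x 3 * hγ2

end LeafAux

/-- for a fixed frame μ, the constraint d(B⁽μ⁾_t) = 0 on every
simultaneity leaf is equivalent to the vanishing on all of spacetime of the
transversal component dF(x)(X⁽μ⁾₁, X⁽μ⁾₂, X⁽μ⁾₃) of dF in frame μ. -/
theorem leaf_constraint_iff_transversal_component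
    (β γ : ℝ) (hβ0 : 0 < β) (hβ1 : β < 1)
    (hγ : γ = (1 - β ^ 2) ^ (-(1 / 2) : ℝ))
    (μ : Fin 4)
    (F : V4 → AlternatingMap ℝ V4 ℝ (Fin 2))
    (hF : ∀ v : Fin 2 → V4, ContDiff ℝ (⊤ : ℕ∞) fun x => F x v) :
    (∀ (t : ℝ) (a : Fin 3 → ℝ) (v : Fin 3 → (Fin 3 → ℝ)),
        extD (pb2 F β γ μ t) a v = 0) ↔
      ∀ x : V4, extD (fun y w => F y w) x (fun k => Xfr β γ μ k) = 0 := by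

  have hb2 : (0 : ℝ) < 1 - β ^ 2 := by nlinarith
  have hγ2 : γ * γ * (1 - β ^ 2) = 1 := by
    have h : (1 - β ^ 2) ^ (-(1 / 2) : ℝ) * (1 - β ^ 2) ^ (-(1 / 2) : ℝ)
        = (1 - β ^ 2) ^ (-1 : ℝ) := by
      rw [← Real.rpow_add hb2]; norm_num
    rw [hγ, h, Real.rpow_neg_one]
    field_simp
  constructor
  · intro h x
    obtain ⟨t, a, hx⟩ := LeafAux.imm_surj β γ hγ2 μ x
    have h1 := h t a (fun k => Pi.single k 1)
    rw [LeafAux.pull hF] at h1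
    have h2 : (fun i : Fin 3 => Lfun β γ μ (Pi.single i 1)) = fun k => Xfr β γ μ k :=
      funext fun k => LeafAux.Lfun_single β γ μ k
    rw [h2, hx] at h1
    exact h1
  · intro h t a v
    rw [LeafAux.pull hF, LeafAux.det_expand hF, h, mul_zero]
end
end
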